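/- Let P be a probability mass function on a finite set U and let δ > 0. If u^n ∈ U^n is δ-typical for P (i.e., the empirical distribution Q of u^n satisfies ‖Q - P‖₁ ≤ δ) and the support of the empirical distribution of u^n is contained in the support of P, then 2^{-n(H(P)+δ₁)} ≤ P^{⊗n}(u^n) ≤ 2^{-n(H(P)-δ₁)}, where δ₁ = δ · log(1 / min_{u ∈ supp P} P(u)). -/

import Mathlib

/-!
Taking base-2 logarithms, `log₂ P^{⊗n}(uⁿ) = ∑ₜ log₂ P(uₜ) = n ∑ᵤ Q(u) log₂ P(u)`, which differs from
`-n H(P)` by `n ∑ᵤ (Q(u) - P(u)) log₂ P(u)`. On the support of `P` we have `c ≤ P(u) ≤ 1`, so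
`|log₂ P(u)| ≤ log₂ (1/c)`, and typicality bounds the deviation by `n δ log₂ (1/c)`.
-/

open Finset Real

lemma sum_comp_eq_sum_card_mul {ι U : Type*} [Fintype ι] [Fintype U] [DecidableEq U]
    (x : ι → U) (f : U → ℝ) :
    ∑ t, f (x t) = ∑ u, (#{t | x t = u} : ℝ) * f u := by
  rw [← sum_fiberwise' univ x f]
  simp [sum_const, nsmul_eq_mul]

lemma prod_eq_rpow_sum_logb {ι : Type*} [Fintype ι] {b : ℝ} (hb0 : 0 < b) (hb1 : b ≠ 1)
    {f : ι → ℝ} (hf : ∀ t, 0 < f t) :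
    ∏ t, f t = b ^ ∑ t, logb b (f t) := by
  rw [rpow_sum_of_pos hb0]
  exact prod_congr rfl fun t _ => (rpow_logb hb0 hb1 (hf t)).symm

lemma abs_logb_le_logb_one_div {b c p : ℝ} (hb : 1 < b) (hc : 0 < c) (hcp : c ≤ p)
    (hp : p ≤ 1) : |logb b p| ≤ logb b (1 / c) := by
  rw [abs_of_nonpos (logb_nonpos hb (hc.le.trans hcp) hp), one_div, logb_inv]
  exact neg_le_neg (logb_le_logb_of_le hb hc hcp)

lemma abs_sum_mul_le_sum_abs_mul {U : Type*} [Fintype U] (a g : U → ℝ) {M : ℝ}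
    (hg : ∀ u, |g u| ≤ M) : |∑ u, a u * g u| ≤ (∑ u, |a u|) * M :=
  calc |∑ u, a u * g u| ≤ ∑ u, |a u * g u| := abs_sum_le_sum_abs _ _
    _ ≤ ∑ u, |a u| * M := by
      gcongr with u
      rw [abs_mul]
      exact mul_le_mul_of_nonneg_left (hg u) (abs_nonneg _)
    _ = (∑ u, |a u|) * M := (sum_mul _ _ _).symm

lemma abs_sum_logb_sub_mul_sum_le {U : Type*} [Fintype U] [DecidableEq U] {n : ℕ}
    (x : Fin n → U) (P : U → ℝ) {M δ : ℝ} (hM : ∀ u, |logb 2 (P u)| ≤ M)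
    (htyp : ∑ u, |(#{t | x t = u} : ℝ) / n - P u| ≤ δ) (hM0 : 0 ≤ M) :
    |∑ t, logb 2 (P (x t)) - n * ∑ u, P u * logb 2 (P u)| ≤ n * (δ * M) := by
  have hcount : ∀ u, (#{t | x t = u} : ℝ) = n * ((#{t | x t = u} : ℝ) / n) := by
    intro u
    rcases n.eq_zero_or_pos with rfl | hn
    · simp
    · field_simp
  have hdev : ∑ t, logb 2 (P (x t)) - n * ∑ u, P u * logb 2 (P u)
      = n * ∑ u, ((#{t | x t = u} : ℝ) / n - P u) * logb 2 (P u) := by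
    rw [sum_comp_eq_sum_card_mul x fun u => logb 2 (P u), mul_sum, mul_sum, ← sum_sub_distrib]
    exact sum_congr rfl fun u _ => by linear_combination logb 2 (P u) * hcount u
  rw [hdev, abs_mul, Nat.abs_cast]
  gcongr
  exact (abs_sum_mul_le_sum_abs_mul _ _ hM).trans (mul_le_mul_of_nonneg_right htyp hM0)

theorem stmt_3_general (U : Type) [Fintype U] [DecidableEq U]
    (P : U → ℝ) (hP0 : ∀ u, 0 ≤ P u) (hP1 : ∑ u, P u = 1)
    (δ : ℝ)
    (c : ℝ) (hc : IsLeast {x : ℝ | ∃ u, P u ≠ 0 ∧ x = P u} c)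
    (n : ℕ) (un : Fin n → U)
    (Q : U → ℝ) (hQ : Q = fun u => ((univ.filter (fun t : Fin n => un t = u)).card : ℝ) / n)
    (htyp : ∑ u, |Q u - P u| ≤ δ)
    (hsupp : ∀ t, P (un t) ≠ 0) :
    (2 : ℝ) ^ (-(n : ℝ) * ((-∑ u, P u * logb 2 (P u)) + δ * logb 2 (1 / c)))
      ≤ ∏ t, P (un t) ∧
    ∏ t, P (un t)
      ≤ (2 : ℝ) ^ (-(n : ℝ) * ((-∑ u, P u * logb 2 (P u)) - δ * logb 2 (1 / c))) := by
  have hP_le_one : ∀ u, P u ≤ 1 := fun u =>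
    hP1 ▸ single_le_sum (fun i _ => hP0 i) (mem_univ u)
  have hc_le : ∀ u, P u ≠ 0 → c ≤ P u := fun u hu => hc.2 ⟨u, hu, rfl⟩
  obtain ⟨u₀, hu₀, hcu₀⟩ := hc.1
  have hc0 : 0 < c := hcu₀ ▸ (hP0 u₀).lt_of_ne' hu₀
  have hL0 : 0 ≤ logb 2 (1 / c) :=
    logb_nonneg one_lt_two (one_le_one_div hc0 (hcu₀ ▸ hP_le_one u₀))
  -- at `P u = 0` the bound holds through the junk value `logb 2 0 = 0`
  have hlog : ∀ u, |logb 2 (P u)| ≤ logb 2 (1 / c) := by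
    intro u
    by_cases hu : P u = 0
    · simpa [hu] using hL0
    · exact abs_logb_le_logb_one_div one_lt_two hc0 (hc_le u hu) (hP_le_one u)
  subst hQ
  obtain ⟨hlo, hhi⟩ := abs_le.mp (abs_sum_logb_sub_mul_sum_le un P hlog htyp hL0)
  rw [prod_eq_rpow_sum_logb two_pos (by norm_num) fun t => hc0.trans_le (hc_le _ (hsupp t)),
    rpow_le_rpow_left_iff one_lt_two, rpow_le_rpow_left_iff one_lt_two]
  constructor <;> linarith

theorem stmt_3 (U : Type) [Fintype U] [DecidableEq U]
    (P : U → ℝ) (hP0 : ∀ u, 0 ≤ P u) (hP1 : ∑ u, P u = 1)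
    (δ : ℝ) (hδ : 0 < δ)
    (c : ℝ) (hc : IsLeast {x : ℝ | ∃ u, P u ≠ 0 ∧ x = P u} c) (hc0 : 0 < c)
    (n : ℕ) (hn : 1 ≤ n) (un : Fin n → U)
    (Q : U → ℝ) (hQ : Q = fun u => ((univ.filter (fun t : Fin n => un t = u)).card : ℝ) / n)
    (htyp : ∑ u, |Q u - P u| ≤ δ)
    (hsupp : ∀ t, P (un t) ≠ 0) :
    (2 : ℝ) ^ (-(n : ℝ) * ((-∑ u, P u * logb 2 (P u)) + δ * logb 2 (1 / c)))
      ≤ ∏ t, P (un t) ∧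
    ∏ t, P (un t)
      ≤ (2 : ℝ) ^ (-(n : ℝ) * ((-∑ u, P u * logb 2 (P u)) - δ * logb 2 (1 / c))) :=
  stmt_3_general U P hP0 hP1 δ c hc n un Q hQ htyp hsupp
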